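/- arXiv:2207.06005 — 3 statements merged into one kernel-verified Lean document; each statement's English description precedes it below -/
import Mathlib

section
/- Let q ≥ 0 be an integer. If two groups G and H are q̂-isoclinic, then B̂₀^q(G) ≅ B̂₀^q(H); i.e. the q̂-Bogomolov multiplier is invariant under q̂-isoclinism. -/
/-!
Nonabelian tensor square modulo `q` (Conduché–Ellis / Brown–Loday for `q = 0`),
presented by generators `g ⊗ h` and `{(g,g)}` with the defining relations.
-/

namespace QTensor

/-- Generators of the `q`-tensor square: `t g h` stands for `g ⊗ h`,
and `d g` stands for the symbol `{(g,g)}`. -/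
inductive Gen (G : Type) : Type
  | t : G → G → Gen G
  | d : G → Gen G

variable (G : Type) [Group G]

/-- The word `g ⊗ h` in the free group on the generators. -/
def T (g h : G) : FreeGroup (Gen G) := FreeGroup.of (Gen.t g h)

/-- The word `{(g,g)}` in the free group on the generators. -/
def D (g : G) : FreeGroup (Gen G) := FreeGroup.of (Gen.d g)

/-- The word `∏_{i=1}^{q-1} (g⁻¹ ⊗ (^(g^(1-q+i)) g₁)^i)` appearing in relation (4). -/
def relProd (q : ℕ) (g g₁ : G) : FreeGroup (Gen G) :=
  ((List.range (q - 1)).map (fun j =>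
    T G g⁻¹ ((g ^ ((1 : ℤ) - (q : ℤ) + (j + 1 : ℕ)) * g₁ *
      (g ^ ((1 : ℤ) - (q : ℤ) + (j + 1 : ℕ)))⁻¹) ^ (j + 1)))).prod

/-- The defining relations of the `q`-tensor square.  For `q = 0` the symbols
`{(g,g)}` are killed, so that the group is the Brown–Loday nonabelian tensor
square generated by the `g ⊗ h` subject to relations (1) and (2). -/
def rels (q : ℕ) : Set (FreeGroup (Gen G)) :=
  {r | ∃ g g₁ h : G,
      r = T G (g * g₁) h * (T G (g * g₁ * g⁻¹) (g * h * g⁻¹) * T G g h)⁻¹} ∪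
  {r | ∃ g h h₁ : G,
      r = T G g (h * h₁) * (T G g h * T G (h * g * h⁻¹) (h * h₁ * h⁻¹))⁻¹} ∪
  {r | ∃ g g₁ h₁ : G,
      r = D G g * T G g₁ h₁ * (D G g)⁻¹ *
        (T G (g ^ q * g₁ * (g ^ q)⁻¹) (g ^ q * h₁ * (g ^ q)⁻¹))⁻¹} ∪
  {r | ∃ g g₁ : G,
      r = D G (g * g₁) * (D G g * relProd G q g g₁ * D G g₁)⁻¹} ∪
  {r | ∃ g g₁ : G,
      r = D G g * D G g₁ * (D G g)⁻¹ * (D G g₁)⁻¹ * (T G (g ^ q) (g₁ ^ q))⁻¹} ∪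
  {r | ∃ g h : G,
      r = D G (g * h * g⁻¹ * h⁻¹) * ((T G g h) ^ q)⁻¹} ∪
  {r | q = 0 ∧ ∃ g : G, r = D G g}

/-- The nonabelian tensor square modulo `q`, `G ⊗^q G`. -/
def tensorSquare (q : ℕ) : Type := PresentedGroup (rels G q)

instance (q : ℕ) : Group (tensorSquare G q) := by unfold tensorSquare; infer_instance

/-- The element `g ⊗ h` of `G ⊗^q G`. -/
def tmk (q : ℕ) (g h : G) : tensorSquare G q := PresentedGroup.of (Gen.t g h)

/-- The element `{(g,g)}` of `G ⊗^q G`. -/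
def dmk (q : ℕ) (g : G) : tensorSquare G q := PresentedGroup.of (Gen.d g)

/-- `∇^q(G)`, the normal closure of the elements `g ⊗ g` in `G ⊗^q G`. -/
def nabla (q : ℕ) : Subgroup (tensorSquare G q) :=
  Subgroup.normalClosure {x | ∃ g : G, x = tmk G q g g}

instance (q : ℕ) : (nabla G q).Normal := Subgroup.normalClosure_normal

/-- The exterior square modulo `q`, `G ∧^q G = (G ⊗^q G)/∇^q(G)`. -/
def extSquare (q : ℕ) : Type := tensorSquare G q ⧸ nabla G q

instance (q : ℕ) : Group (extSquare G q) := by unfold extSquare; infer_instance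

/-- The element `g ∧ h` of `G ∧^q G`. -/
def wmk (q : ℕ) (g h : G) : extSquare G q := QuotientGroup.mk (tmk G q g h)

/-- The image of the symbol `{(g,g)}` in `G ∧^q G`. -/
def dwmk (q : ℕ) (g : G) : extSquare G q := QuotientGroup.mk (dmk G q g)

/-- The exterior centre variant `Z^∧_q(G) = {g : g ∧ h = 1 for all h}` (as a set). -/
def Zext (q : ℕ) : Set G := {g | ∀ h : G, wmk G q g h = 1}

/-- `E^∧_q(G) = {g ∈ Z^∧_q(G) : {(g,g)} = 1 in G ∧^q G}` (as a set); for `q = 0`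
the second condition is automatic, so `E^∧_0(G) = Z^∧(G)`. -/
def Eext (q : ℕ) : Set G := {g | (∀ h : G, wmk G q g h = 1) ∧ dwmk G q g = 1}

/-- The subgroup `G^q[G,G]` generated by all `q`-th powers and all commutators. -/
def qPowComm (q : ℕ) : Subgroup G :=
  Subgroup.closure ({x | ∃ g : G, x = g ^ q} ∪ {x | ∃ a b : G, x = a * b * a⁻¹ * b⁻¹})

theorem pow_mem_qPowComm (q : ℕ) (g : G) : g ^ q ∈ qPowComm G q :=
  Subgroup.subset_closure (Or.inl ⟨g, rfl⟩)

theorem commutator_mem_qPowComm (q : ℕ) (a b : G) :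
    a * b * a⁻¹ * b⁻¹ ∈ qPowComm G q :=
  Subgroup.subset_closure (Or.inr ⟨a, b, rfl⟩)

open scoped commutatorElement in
theorem mem_commutator (a b : G) : ⁅a, b⁆ ∈ commutator G :=
  Subgroup.commutator_mem_commutator (Subgroup.mem_top a) (Subgroup.mem_top b)

/-- `M₀^q(G)`: the subgroup of `G ∧^q G` generated by the `x ∧ y` with `[x,y] = 1`.
(It is contained in the `q`-Schur multiplier `M^q(G)`.) -/
def M0 (q : ℕ) : Subgroup (extSquare G q) :=
  Subgroup.closure {x | ∃ a b : G, a * b = b * a ∧ x = wmk G q a b}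

/-- `M̂₀^q(G)`: the subgroup of `G ∧^q G` generated by the `x ∧ y` with `[x,y] = 1`
together with the `{(g,g)}` with `g^q = 1`. -/
def M0hat (q : ℕ) : Subgroup (extSquare G q) :=
  Subgroup.closure
    ({x | ∃ a b : G, a * b = b * a ∧ x = wmk G q a b} ∪
     {x | ∃ g : G, g ^ q = 1 ∧ x = dwmk G q g})

/-- A group `Q` is capable if `Q ≅ E/Z(E)` for some group `E`. -/
def Capable (Q : Type) [Group Q] : Prop :=
  ∃ (E : Type) (_ : Group E), Nonempty (Q ≃* E ⧸ Subgroup.center E)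

end QTensor

/-!
Let `G ⋏ G = (G ∧^q G)/M̂₀^q(G)`. Since `M̂₀^q(G) ≤ ker η`, the map `η` descends to
`η̄ : G ⋏ G → G`, and `B̂₀^q(G) ≅ ker η̄`.

A `q̂`-isoclinism `(α, β)` yields `G ⋏ G ≅ H ⋏ H`: send `g ∧ h` to `a ∧ b` and `{(g,g)}` to
`{(a,a)}`, where `a, b` lift `α ḡ, α h̄`. Changing a lift by an element of `Ẑ_q(H)` changes these
symbols only by elements of `M̂₀^q(H)`, and the defining relations are natural in the group, so the
assignment is a homomorphism `G ∧^q G → (H/Ẑ_q(H)) ∧^q (H/Ẑ_q(H)) → H ⋏ H`. Because `β` carries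
commutators to commutators and `q`-th powers to `q`-th powers, commuting pairs and `q`-torsion
are preserved, so `M̂₀^q(G)` is killed; `(α⁻¹, β⁻¹)` gives the inverse. Finally the resulting
isomorphism `φ` satisfies `η̄_H ∘ φ = β ∘ η̄_G`, so it matches the kernels of `η̄_G` and `η̄_H`.
-/

theorem Subgroup.closure_normal_of_conj_mem {G : Type*} [Group G] {s : Set G}
    (h : ∀ a ∈ s, ∀ c : G, c * a * c⁻¹ ∈ s) : (Subgroup.closure s).Normal := by
  have hconj : Group.conjugatesOfSet s ⊆ s := fun x hx => by
    obtain ⟨a, ha, hc⟩ := Group.mem_conjugatesOfSet_iff.1 hx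
    obtain ⟨c, rfl⟩ := isConj_iff.1 hc
    exact h a ha c
  have : Subgroup.closure s = Subgroup.normalClosure s :=
    le_antisymm Subgroup.closure_le_normalClosure (Subgroup.closure_mono hconj)
  exact this ▸ Subgroup.normalClosure_normal

noncomputable def QuotientGroup.subgroupOfKerEquivKerLift {A B : Type*} [Group A] [Group B]
    (η : A →* B) (N : Subgroup A) [N.Normal] (hN : N ≤ η.ker) :
    η.ker ⧸ N.subgroupOf η.ker ≃* (QuotientGroup.lift N η hN).ker :=
  let r := (QuotientGroup.mk' N).comp η.ker.subtype
  have hker : r.ker = N.subgroupOf η.ker := by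
    ext x
    rw [MonoidHom.mem_ker, Subgroup.mem_subgroupOf, MonoidHom.comp_apply, QuotientGroup.mk'_apply,
      QuotientGroup.eq_one_iff, Subgroup.coe_subtype]
  have hrange : r.range = (QuotientGroup.lift N η hN).ker := by
    rw [MonoidHom.range_comp, Subgroup.range_subtype, QuotientGroup.ker_lift]
  (QuotientGroup.quotientMulEquivOfEq hker.symm).trans
    ((QuotientGroup.quotientKerEquivRange r).trans (MulEquiv.subgroupCongr hrange))

theorem Subgroup.map_ker_eq_ker_of_iff {A A' B B' : Type*} [Group A] [Group A'] [Group B] [Group B']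
    (e : A ≃* A') {η : A →* B} {η' : A' →* B'} (h : ∀ x, η' (e x) = 1 ↔ η x = 1) :
    η.ker.map e.toMonoidHom = η'.ker := by
  ext y
  rw [Subgroup.mem_map_equiv, MonoidHom.mem_ker, MonoidHom.mem_ker, ← h, e.apply_symm_apply]

namespace QTensor

section Relations

variable {G : Type} [Group G] {q : ℕ}

variable (q) in
def freeToExt : FreeGroup (Gen G) →* extSquare G q :=
  (QuotientGroup.mk' (nabla G q)).comp (PresentedGroup.mk (rels G q))

variable (q) in
def extGen (x : Gen G) : extSquare G q := freeToExt q (FreeGroup.of x)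

@[simp] theorem extGen_t (g h : G) : extGen q (.t g h) = wmk G q g h := rfl

@[simp] theorem extGen_d (g : G) : extGen q (.d g) = dwmk G q g := rfl

theorem freeToExt_T (g h : G) : freeToExt q (T G g h) = wmk G q g h := rfl

theorem freeToExt_D (g : G) : freeToExt q (D G g) = dwmk G q g := rfl

theorem freeToExt_eq_one {r : FreeGroup (Gen G)} (hr : r ∈ rels G q) : freeToExt q r = 1 :=
  congrArg (QuotientGroup.mk' (nabla G q)) ((QuotientGroup.eq_one_iff r).2
    (Subgroup.subset_normalClosure hr))

theorem freeToExt_eq_of_mem_rels {x y : FreeGroup (Gen G)} (h : x * y⁻¹ ∈ rels G q) :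
    freeToExt q x = freeToExt q y := by
  simpa only [map_mul, map_inv, mul_inv_eq_one] using freeToExt_eq_one h

theorem wmk_self (g : G) : wmk G q g g = 1 :=
  (QuotientGroup.eq_one_iff _).2 (Subgroup.subset_normalClosure ⟨g, rfl⟩)

theorem wmk_mul_left (g g₁ h : G) :
    wmk G q (g * g₁) h = wmk G q (g * g₁ * g⁻¹) (g * h * g⁻¹) * wmk G q g h := by
  simpa only [map_mul, map_inv, freeToExt_T, freeToExt_D] using
    freeToExt_eq_of_mem_rels (q := q) (Or.inl (Or.inl (Or.inl (Or.inl (Or.inl (Or.inl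
    ⟨g, g₁, h, rfl⟩))))))

theorem wmk_mul_right (g h h₁ : G) :
    wmk G q g (h * h₁) = wmk G q g h * wmk G q (h * g * h⁻¹) (h * h₁ * h⁻¹) := by
  simpa only [map_mul, map_inv, freeToExt_T, freeToExt_D] using
    freeToExt_eq_of_mem_rels (q := q) (Or.inl (Or.inl (Or.inl (Or.inl (Or.inl (Or.inr
    ⟨g, h, h₁, rfl⟩))))))

theorem dwmk_conj_wmk (g g₁ h₁ : G) :
    dwmk G q g * wmk G q g₁ h₁ * (dwmk G q g)⁻¹
      = wmk G q (g ^ q * g₁ * (g ^ q)⁻¹) (g ^ q * h₁ * (g ^ q)⁻¹) := by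
  simpa only [map_mul, map_inv, freeToExt_T, freeToExt_D] using
    freeToExt_eq_of_mem_rels (q := q) (Or.inl (Or.inl (Or.inl (Or.inl (Or.inr
    ⟨g, g₁, h₁, rfl⟩)))))

theorem dwmk_mul (g g₁ : G) :
    dwmk G q (g * g₁) = dwmk G q g * freeToExt q (relProd G q g g₁) * dwmk G q g₁ := by
  simpa only [map_mul, map_inv, freeToExt_T, freeToExt_D] using
    freeToExt_eq_of_mem_rels (q := q) (Or.inl (Or.inl (Or.inl (Or.inr ⟨g, g₁, rfl⟩))))

theorem dwmk_commutator (g g₁ : G) :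
    dwmk G q g * dwmk G q g₁ * (dwmk G q g)⁻¹ * (dwmk G q g₁)⁻¹ = wmk G q (g ^ q) (g₁ ^ q) := by
  simpa only [map_mul, map_inv, freeToExt_T, freeToExt_D] using
    freeToExt_eq_of_mem_rels (q := q) (Or.inl (Or.inl (Or.inr ⟨g, g₁, rfl⟩)))

theorem wmk_one_right (g : G) : wmk G q g 1 = 1 := by
  simpa using wmk_mul_right (q := q) g 1 1

theorem wmk_conj_wmk (x y c d : G) :
    wmk G q x y * wmk G q c d * (wmk G q x y)⁻¹
      = wmk G q ((x*y*x⁻¹*y⁻¹)*c*(x*y*x⁻¹*y⁻¹)⁻¹) ((x*y*x⁻¹*y⁻¹)*d*(x*y*x⁻¹*y⁻¹)⁻¹) := by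
  -- expand `(x a) ∧ (y b)` by relation (1) then (2), and by (2) then (1)
  have expand (a b : G) : wmk G q (x*y*a*y⁻¹*x⁻¹) (x*y*b*y⁻¹*x⁻¹) * wmk G q x y
      = wmk G q x y * wmk G q (y*x*a*x⁻¹*y⁻¹) (y*x*b*x⁻¹*y⁻¹) := by
    have h₁ := wmk_mul_left (q := q) x a (y*b)
    rw [show x*(y*b)*x⁻¹ = (x*y*x⁻¹) * (x*b*x⁻¹) by group,
      wmk_mul_right (x*a*x⁻¹) (x*y*x⁻¹) (x*b*x⁻¹), wmk_mul_right x y b,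
      show (x*y*x⁻¹)*(x*a*x⁻¹)*(x*y*x⁻¹)⁻¹ = x*y*a*y⁻¹*x⁻¹ by group,
      show (x*y*x⁻¹)*(x*b*x⁻¹)*(x*y*x⁻¹)⁻¹ = x*y*b*y⁻¹*x⁻¹ by group] at h₁
    have h₂ := wmk_mul_right (q := q) (x*a) y b
    rw [wmk_mul_left x a y, show y*(x*a)*y⁻¹ = (y*x*y⁻¹)*(y*a*y⁻¹) by group,
      wmk_mul_left (y*x*y⁻¹) (y*a*y⁻¹) (y*b*y⁻¹),
      show (y*x*y⁻¹)*(y*a*y⁻¹)*(y*x*y⁻¹)⁻¹ = y*x*a*x⁻¹*y⁻¹ by group,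
      show (y*x*y⁻¹)*(y*b*y⁻¹)*(y*x*y⁻¹)⁻¹ = y*x*b*x⁻¹*y⁻¹ by group] at h₂
    have h := mul_left_cancel (a := wmk G q (x*a*x⁻¹) (x*y*x⁻¹))
      (by simpa only [mul_assoc] using h₁.symm.trans h₂)
    exact mul_right_cancel (b := wmk G q (y*x*y⁻¹) (y*b*y⁻¹)) (by simpa only [mul_assoc] using h)
  have := expand (x⁻¹*y⁻¹*c*y*x) (x⁻¹*y⁻¹*d*y*x)
  rw [show y*x*(x⁻¹*y⁻¹*c*y*x)*x⁻¹*y⁻¹ = c by group,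
    show y*x*(x⁻¹*y⁻¹*d*y*x)*x⁻¹*y⁻¹ = d by group,
    show x*y*(x⁻¹*y⁻¹*c*y*x)*y⁻¹*x⁻¹ = (x*y*x⁻¹*y⁻¹)*c*(x*y*x⁻¹*y⁻¹)⁻¹ by group,
    show x*y*(x⁻¹*y⁻¹*d*y*x)*y⁻¹*x⁻¹ = (x*y*x⁻¹*y⁻¹)*d*(x*y*x⁻¹*y⁻¹)⁻¹ by group] at this
  rw [← this, mul_inv_cancel_right]

end Relations

section UniversalProperty

variable {G K : Type} {M : Type*} [Group G] [Group K] [Group M] {q : ℕ}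

theorem closure_range_extGen : Subgroup.closure (Set.range (extGen (G := G) q)) = ⊤ := by
  rw [show Set.range (extGen (G := G) q) = freeToExt q '' Set.range FreeGroup.of from
      Set.range_comp _ _, ← MonoidHom.map_closure, FreeGroup.closure_range_of,
    ← MonoidHom.range_eq_map, MonoidHom.range_eq_top]
  exact (QuotientGroup.mk'_surjective _).comp (PresentedGroup.mk_surjective _)

theorem extSquare.hom_ext {f f' : extSquare G q →* M}
    (ht : ∀ g h, f (wmk G q g h) = f' (wmk G q g h)) (hd : ∀ g, f (dwmk G q g) = f' (dwmk G q g)) :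
    f = f' :=
  MonoidHom.eq_of_eqOn_dense (closure_range_extGen (G := G) (q := q))
    (by rintro _ ⟨⟨g, h⟩ | g, rfl⟩ <;> simp [ht, hd])

theorem extSquare.eq_top_of_generators_mem {S : Subgroup (extSquare G q)}
    (ht : ∀ g h, wmk G q g h ∈ S) (hd : ∀ g, dwmk G q g ∈ S) : S = ⊤ :=
  top_le_iff.1 (closure_range_extGen (G := G) (q := q) ▸ (Subgroup.closure_le S).2
    (by rintro _ ⟨⟨g, h⟩ | g, rfl⟩ <;> simp [ht, hd]))

def extSquare.lift (F : Gen G → M) (hrels : ∀ r ∈ rels G q, FreeGroup.lift F r = 1)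
    (hself : ∀ g, F (.t g g) = 1) : extSquare G q →* M :=
  QuotientGroup.lift (nabla G q) (show tensorSquare G q →* M from PresentedGroup.toGroup hrels)
    (Subgroup.normalClosure_le_normal (by
      rintro _ ⟨g, rfl⟩
      exact (PresentedGroup.toGroup.of hrels).trans (hself g)))

theorem extSquare.lift_extGen (F : Gen G → M) (hrels : ∀ r ∈ rels G q, FreeGroup.lift F r = 1)
    (hself : ∀ g, F (.t g g) = 1) (x : Gen G) : extSquare.lift F hrels hself (extGen q x) = F x :=
  PresentedGroup.toGroup.of hrels

def Gen.map (φ : G → K) : Gen G → Gen K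
  | .t g h => .t (φ g) (φ h)
  | .d g => .d (φ g)

theorem map_relProd (φ : G →* K) (g g₁ : G) :
    FreeGroup.map (Gen.map φ) (relProd G q g g₁) = relProd K q (φ g) (φ g₁) := by
  simp [relProd, T, map_list_prod, Function.comp_def, Gen.map]

theorem mapsTo_rels (φ : G →* K) :
    Set.MapsTo (FreeGroup.map (Gen.map φ)) (rels G q) (rels K q) := by
  refine .union_union (.union_union (.union_union (.union_union (.union_union
    (.union_union ?_ ?_) ?_) ?_) ?_) ?_) ?_
  · rintro _ ⟨g, g₁, h, rfl⟩; exact ⟨φ g, φ g₁, φ h, by simp [T, Gen.map]⟩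
  · rintro _ ⟨g, h, h₁, rfl⟩; exact ⟨φ g, φ h, φ h₁, by simp [T, Gen.map]⟩
  · rintro _ ⟨g, g₁, h₁, rfl⟩; exact ⟨φ g, φ g₁, φ h₁, by simp [T, D, Gen.map]⟩
  · rintro _ ⟨g, g₁, rfl⟩; exact ⟨φ g, φ g₁, by simp [D, Gen.map, map_relProd]⟩
  · rintro _ ⟨g, g₁, rfl⟩; exact ⟨φ g, φ g₁, by simp [T, D, Gen.map]⟩
  · rintro _ ⟨g, h, rfl⟩; exact ⟨φ g, φ h, by simp [T, D, Gen.map]⟩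
  · rintro _ ⟨hq, g, rfl⟩; exact ⟨hq, φ g, by simp [D, Gen.map]⟩

theorem surjOn_rels {φ : G →* K} (hφ : Function.Surjective φ) :
    Set.SurjOn (FreeGroup.map (Gen.map φ)) (rels G q) (rels K q) := by
  refine .union_union (.union_union (.union_union (.union_union (.union_union
    (.union_union ?_ ?_) ?_) ?_) ?_) ?_) ?_
  · rintro _ ⟨g, g₁, h, rfl⟩
    obtain ⟨g, rfl⟩ := hφ g; obtain ⟨g₁, rfl⟩ := hφ g₁; obtain ⟨h, rfl⟩ := hφ h
    exact ⟨_, ⟨g, g₁, h, rfl⟩, by simp [T, Gen.map]⟩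
  · rintro _ ⟨g, h, h₁, rfl⟩
    obtain ⟨g, rfl⟩ := hφ g; obtain ⟨h, rfl⟩ := hφ h; obtain ⟨h₁, rfl⟩ := hφ h₁
    exact ⟨_, ⟨g, h, h₁, rfl⟩, by simp [T, Gen.map]⟩
  · rintro _ ⟨g, g₁, h₁, rfl⟩
    obtain ⟨g, rfl⟩ := hφ g; obtain ⟨g₁, rfl⟩ := hφ g₁; obtain ⟨h₁, rfl⟩ := hφ h₁
    exact ⟨_, ⟨g, g₁, h₁, rfl⟩, by simp [T, D, Gen.map]⟩
  · rintro _ ⟨g, g₁, rfl⟩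
    obtain ⟨g, rfl⟩ := hφ g; obtain ⟨g₁, rfl⟩ := hφ g₁
    exact ⟨_, ⟨g, g₁, rfl⟩, by simp [D, Gen.map, map_relProd]⟩
  · rintro _ ⟨g, g₁, rfl⟩
    obtain ⟨g, rfl⟩ := hφ g; obtain ⟨g₁, rfl⟩ := hφ g₁
    exact ⟨_, ⟨g, g₁, rfl⟩, by simp [T, D, Gen.map]⟩
  · rintro _ ⟨g, h, rfl⟩
    obtain ⟨g, rfl⟩ := hφ g; obtain ⟨h, rfl⟩ := hφ h
    exact ⟨_, ⟨g, h, rfl⟩, by simp [T, D, Gen.map]⟩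
  · rintro _ ⟨hq, g, rfl⟩
    obtain ⟨g, rfl⟩ := hφ g
    exact ⟨_, ⟨hq, g, rfl⟩, by simp [D, Gen.map]⟩

end UniversalProperty

section Normality

variable {G : Type} [Group G] {q : ℕ}

theorem exists_conj_wmk (u : extSquare G q) :
    ∃ k : G, ∀ a b, u * wmk G q a b * u⁻¹ = wmk G q (k * a * k⁻¹) (k * b * k⁻¹) := by
  have hu : u ∈ Subgroup.closure (Set.range (extGen (G := G) q)) :=
    closure_range_extGen (G := G) (q := q) ▸ Subgroup.mem_top u
  induction hu using Subgroup.closure_induction with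
  | mem _ hx =>
    obtain ⟨⟨x, y⟩ | g, rfl⟩ := hx
    · exact ⟨x * y * x⁻¹ * y⁻¹, wmk_conj_wmk x y⟩
    · exact ⟨g ^ q, dwmk_conj_wmk g⟩
  | one => exact ⟨1, by simp⟩
  | mul u v _ _ hu hv =>
    obtain ⟨k, hk⟩ := hu
    obtain ⟨l, hl⟩ := hv
    refine ⟨k * l, fun a b => ?_⟩
    rw [show u * v * wmk G q a b * (u * v)⁻¹ = u * (v * wmk G q a b * v⁻¹) * u⁻¹ by group, hl, hk]
    congr 1 <;> group
  | inv u _ hu =>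
    obtain ⟨k, hk⟩ := hu
    refine ⟨k⁻¹, fun a b => ?_⟩
    have := hk (k⁻¹ * a * k) (k⁻¹ * b * k)
    rw [show k * (k⁻¹ * a * k) * k⁻¹ = a by group, show k * (k⁻¹ * b * k) * k⁻¹ = b by group]
      at this
    rw [← this, inv_inv]
    group

theorem dwmk_mem_center {x : G} (hx : x ^ q = 1) :
    dwmk G q x ∈ Subgroup.center (extSquare G q) := by
  have : Subgroup.centralizer {dwmk G q x} = ⊤ := by
    refine extSquare.eq_top_of_generators_mem (fun g h => ?_) (fun g => ?_) <;>
      rw [Subgroup.mem_centralizer_singleton_iff]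
    · simpa [hx] using (mul_inv_eq_iff_eq_mul.1 (dwmk_conj_wmk (q := q) x g h)).symm
    · exact commutatorElement_eq_one_iff_mul_comm.1
        (by rw [commutatorElement_def, dwmk_commutator, hx, wmk_one_right])
  exact Subgroup.mem_center_iff.2 fun u =>
    Subgroup.mem_centralizer_singleton_iff.1 ((Subgroup.eq_top_iff' _).1 this u)

instance M0hat_normal : (M0hat G q).Normal := by
  refine Subgroup.closure_normal_of_conj_mem ?_
  rintro _ (⟨a, b, hab, rfl⟩ | ⟨g, hg, rfl⟩) c
  · obtain ⟨k, hk⟩ := exists_conj_wmk c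
    exact Or.inl ⟨k * a * k⁻¹, k * b * k⁻¹, Commute.conj hab k, hk a b⟩
  · exact Or.inr ⟨g, hg, by rw [Subgroup.mem_center_iff.1 (dwmk_mem_center hg) c,
      mul_inv_cancel_right]⟩

end Normality

-- `Ẑ_q(G)`
def qCenter (G : Type) [Group G] (q : ℕ) : Subgroup G where
  carrier := {g | g ∈ Subgroup.center G ∧ g ^ q = 1}
  mul_mem' {a b} ha hb := ⟨mul_mem ha.1 hb.1, by
    rw [Commute.mul_pow (Subgroup.mem_center_iff.1 hb.1 a), ha.2, hb.2, one_mul]⟩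
  one_mem' := ⟨one_mem _, one_pow q⟩
  inv_mem' {a} ha := ⟨inv_mem ha.1, by rw [inv_pow, ha.2, inv_one]⟩

-- `G ⋏ G`
abbrev curlyExtSquare (G : Type) [Group G] (q : ℕ) : Type := extSquare G q ⧸ M0hat G q

section Curly

variable {G : Type} [Group G] {q : ℕ}

theorem mk_wmk_eq_one {a b : G} (hab : a * b = b * a) :
    ((wmk G q a b : extSquare G q) : curlyExtSquare G q) = 1 :=
  (QuotientGroup.eq_one_iff _).2 (Subgroup.subset_closure (Or.inl ⟨a, b, hab, rfl⟩))

theorem mk_dwmk_eq_one {g : G} (hg : g ^ q = 1) :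
    ((dwmk G q g : extSquare G q) : curlyExtSquare G q) = 1 :=
  (QuotientGroup.eq_one_iff _).2 (Subgroup.subset_closure (Or.inr ⟨g, hg, rfl⟩))

theorem mk_wmk_mul_central_left {z : G} (hz : z ∈ Subgroup.center G) (g h : G) :
    ((wmk G q (g * z) h : extSquare G q) : curlyExtSquare G q) = wmk G q g h := by
  rw [wmk_mul_left, QuotientGroup.mk_mul, Subgroup.mem_center_iff.1 hz g, mul_inv_cancel_right,
    mk_wmk_eq_one (Subgroup.mem_center_iff.1 hz _).symm, one_mul]

theorem mk_wmk_mul_central_right {z : G} (hz : z ∈ Subgroup.center G) (g h : G) :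
    ((wmk G q g (h * z) : extSquare G q) : curlyExtSquare G q) = wmk G q g h := by
  rw [wmk_mul_right, QuotientGroup.mk_mul, Subgroup.mem_center_iff.1 hz h, mul_inv_cancel_right,
    mk_wmk_eq_one (Subgroup.mem_center_iff.1 hz _), mul_one]

theorem freeToExt_relProd_mem {z : G} (hz : z ∈ Subgroup.center G) (g : G) :
    freeToExt q (relProd G q g z) ∈ M0hat G q := by
  rw [relProd, map_list_prod]
  refine list_prod_mem fun x hx => ?_
  simp only [List.map_map, List.mem_map, Function.comp_apply] at hx
  obtain ⟨j, -, rfl⟩ := hx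
  rw [freeToExt_T, Subgroup.mem_center_iff.1 hz, mul_inv_cancel_right]
  exact Subgroup.subset_closure
    (Or.inl ⟨_, _, Subgroup.mem_center_iff.1 (pow_mem hz _) g⁻¹, rfl⟩)

theorem mk_dwmk_mul_qCenter {z : G} (hz : z ∈ qCenter G q) (g : G) :
    ((dwmk G q (g * z) : extSquare G q) : curlyExtSquare G q) = dwmk G q g := by
  rw [dwmk_mul, QuotientGroup.mk_mul, QuotientGroup.mk_mul,
    (QuotientGroup.eq_one_iff _).2 (freeToExt_relProd_mem hz.1 g), mk_dwmk_eq_one hz.2,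
    mul_one, mul_one]

end Curly

section Functoriality

variable {G K : Type} [Group G] [Group K] {q : ℕ}

def extSquare.map (φ : G →* K) : extSquare G q →* extSquare K q :=
  extSquare.lift (extGen q ∘ Gen.map φ)
    (fun r hr => by
      have : FreeGroup.lift (extGen q ∘ Gen.map φ)
          = (freeToExt q).comp (FreeGroup.map (Gen.map φ)) :=
        FreeGroup.ext_hom _ _ fun _ => rfl
      rw [this, MonoidHom.comp_apply, freeToExt_eq_one (mapsTo_rels φ hr)])
    (fun g => wmk_self (φ g))

theorem extSquare.map_wmk (φ : G →* K) (g h : G) :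
    extSquare.map φ (wmk G q g h) = wmk K q (φ g) (φ h) :=
  extSquare.lift_extGen _ _ _ (.t g h)

theorem extSquare.map_dwmk (φ : G →* K) (g : G) :
    extSquare.map φ (dwmk G q g) = dwmk K q (φ g) :=
  extSquare.lift_extGen _ _ _ (.d g)

end Functoriality

section Descent

variable {H Q : Type} [Group H] [Group Q] {q : ℕ} {π : H →* Q}

theorem exists_mul_eq_of_map_eq {a a' : H} (h : π a = π a') : ∃ z ∈ π.ker, a' = a * z :=
  ⟨a⁻¹ * a', by rw [MonoidHom.mem_ker, map_mul, map_inv, h, inv_mul_cancel], by group⟩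

theorem mk_wmk_eq_of_map_eq (hker : π.ker ≤ qCenter H q) {a a' b b' : H}
    (ha : π a = π a') (hb : π b = π b') :
    ((wmk H q a b : extSquare H q) : curlyExtSquare H q) = wmk H q a' b' := by
  obtain ⟨z, hz, rfl⟩ := exists_mul_eq_of_map_eq ha
  obtain ⟨w, hw, rfl⟩ := exists_mul_eq_of_map_eq hb
  rw [mk_wmk_mul_central_left (hker hz).1, mk_wmk_mul_central_right (hker hw).1]

theorem mk_dwmk_eq_of_map_eq (hker : π.ker ≤ qCenter H q) {a a' : H} (ha : π a = π a') :
    ((dwmk H q a : extSquare H q) : curlyExtSquare H q) = dwmk H q a' := by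
  obtain ⟨z, hz, rfl⟩ := exists_mul_eq_of_map_eq ha
  rw [mk_dwmk_mul_qCenter (hker hz)]

noncomputable def descendGen (hπ : Function.Surjective π) : Gen Q → curlyExtSquare H q
  | .t x y => wmk H q (Function.surjInv hπ x) (Function.surjInv hπ y)
  | .d x => dwmk H q (Function.surjInv hπ x)

theorem descendGen_map (hπ : Function.Surjective π) (hker : π.ker ≤ qCenter H q) (x : Gen H) :
    descendGen hπ (Gen.map π x) = (extGen q x : curlyExtSquare H q) := by
  cases x with
  | t a b => exact mk_wmk_eq_of_map_eq hker (Function.surjInv_eq hπ _) (Function.surjInv_eq hπ _)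
  | d a => exact mk_dwmk_eq_of_map_eq hker (Function.surjInv_eq hπ _)

noncomputable def descend (hπ : Function.Surjective π) (hker : π.ker ≤ qCenter H q) :
    extSquare Q q →* curlyExtSquare H q :=
  extSquare.lift (descendGen hπ)
    (fun r hr => by
      obtain ⟨r', hr', rfl⟩ := surjOn_rels hπ hr
      have : (FreeGroup.lift (descendGen hπ)).comp (FreeGroup.map (Gen.map π))
          = (QuotientGroup.mk' (M0hat H q)).comp (freeToExt q) :=
        FreeGroup.ext_hom _ _ fun x => by
          simp only [MonoidHom.comp_apply, FreeGroup.map.of, FreeGroup.lift_apply_of]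
          exact descendGen_map hπ hker x
      rw [← MonoidHom.comp_apply, this, MonoidHom.comp_apply, freeToExt_eq_one hr', map_one])
    (fun x => mk_wmk_eq_one rfl)

theorem descend_wmk (hπ : Function.Surjective π) (hker : π.ker ≤ qCenter H q) (a b : H) :
    descend hπ hker (wmk Q q (π a) (π b)) = wmk H q a b :=
  (extSquare.lift_extGen _ _ _ (.t (π a) (π b))).trans (descendGen_map hπ hker (.t a b))

theorem descend_dwmk (hπ : Function.Surjective π) (hker : π.ker ≤ qCenter H q) (a : H) :
    descend hπ hker (dwmk Q q (π a)) = dwmk H q a :=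
  (extSquare.lift_extGen _ _ _ (.d (π a))).trans (descendGen_map hπ hker (.d a))

end Descent

section Isoclinism

variable {G H : Type} [Group G] [Group H] {q : ℕ}
  {ZG : Subgroup G} [ZG.Normal] {ZH : Subgroup H} [ZH.Normal]

def IsQHatIsoclinism (α : G ⧸ ZG ≃* H ⧸ ZH) (β : qPowComm G q ≃* qPowComm H q) : Prop :=
  ∀ (a₁ b₁ : G) (a₂ b₂ : H), α a₁ = a₂ → α b₁ = b₂ →
    (β ⟨a₁ * b₁ * a₁⁻¹ * b₁⁻¹, commutator_mem_qPowComm G q a₁ b₁⟩ : H) = a₂ * b₂ * a₂⁻¹ * b₂⁻¹ ∧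
    (β ⟨a₁ ^ q, pow_mem_qPowComm G q a₁⟩ : H) = a₂ ^ q

variable {α : G ⧸ ZG ≃* H ⧸ ZH} {β : qPowComm G q ≃* qPowComm H q}

theorem IsQHatIsoclinism.symm (h : IsQHatIsoclinism α β) : IsQHatIsoclinism α.symm β.symm := by
  intro a₂ b₂ a₁ b₁ ha hb
  obtain ⟨hc, hp⟩ := h a₁ b₁ a₂ b₂ (by rw [← ha, α.apply_symm_apply])
    (by rw [← hb, α.apply_symm_apply])
  constructor
  · have : β.symm ⟨a₂ * b₂ * a₂⁻¹ * b₂⁻¹, commutator_mem_qPowComm H q a₂ b₂⟩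
        = ⟨a₁ * b₁ * a₁⁻¹ * b₁⁻¹, commutator_mem_qPowComm G q a₁ b₁⟩ :=
      β.symm_apply_eq.2 (Subtype.ext hc.symm)
    exact congrArg Subtype.val this
  · have : β.symm ⟨a₂ ^ q, pow_mem_qPowComm H q a₂⟩ = ⟨a₁ ^ q, pow_mem_qPowComm G q a₁⟩ :=
      β.symm_apply_eq.2 (Subtype.ext hp.symm)
    exact congrArg Subtype.val this

theorem IsQHatIsoclinism.mul_comm (h : IsQHatIsoclinism α β) {a₁ b₁ : G} {a₂ b₂ : H}
    (ha : α a₁ = a₂) (hb : α b₁ = b₂) (hab : a₁ * b₁ = b₁ * a₁) : a₂ * b₂ = b₂ * a₂ := by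
  have hc := (h a₁ b₁ a₂ b₂ ha hb).1
  rw [(Subgroup.mk_eq_one _).2 (by rw [hab]; group), map_one, OneMemClass.coe_one] at hc
  exact commutatorElement_eq_one_iff_mul_comm.1 hc.symm

theorem IsQHatIsoclinism.pow_eq_one (h : IsQHatIsoclinism α β) {a₁ : G} {a₂ : H}
    (ha : α a₁ = a₂) (hq : a₁ ^ q = 1) : a₂ ^ q = 1 := by
  have hp := (h a₁ a₁ a₂ a₂ ha ha).2
  rwa [(Subgroup.mk_eq_one _).2 hq, map_one, OneMemClass.coe_one, eq_comm] at hp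

end Isoclinism

section CurlyEquiv

variable {G H : Type} [Group G] [Group H] {q : ℕ}
  {ZG : Subgroup G} [ZG.Normal] {ZH : Subgroup H} [ZH.Normal]
  {α : G ⧸ ZG ≃* H ⧸ ZH} {β : qPowComm G q ≃* qPowComm H q}

variable (q) in
noncomputable def extToCurly (hZH : ZH ≤ qCenter H q) (α : G ⧸ ZG ≃* H ⧸ ZH) :
    extSquare G q →* curlyExtSquare H q :=
  (descend (QuotientGroup.mk'_surjective ZH) (by rwa [QuotientGroup.ker_mk'])).comp
    (extSquare.map (α.toMonoidHom.comp (QuotientGroup.mk' ZG)))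

theorem extToCurly_wmk (hZH : ZH ≤ qCenter H q) {a b : G} {a' b' : H}
    (ha : α a = a') (hb : α b = b') : extToCurly q hZH α (wmk G q a b) = wmk H q a' b' := by
  rw [extToCurly, MonoidHom.comp_apply, extSquare.map_wmk]
  simp only [MonoidHom.comp_apply, MulEquiv.coe_toMonoidHom, QuotientGroup.mk'_apply, ha, hb]
  exact descend_wmk _ _ a' b'

theorem extToCurly_dwmk (hZH : ZH ≤ qCenter H q) {a : G} {a' : H} (ha : α a = a') :
    extToCurly q hZH α (dwmk G q a) = dwmk H q a' := by
  rw [extToCurly, MonoidHom.comp_apply, extSquare.map_dwmk]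
  simp only [MonoidHom.comp_apply, MulEquiv.coe_toMonoidHom, QuotientGroup.mk'_apply, ha]
  exact descend_dwmk _ _ a'

theorem M0hat_le_ker_extToCurly (hZH : ZH ≤ qCenter H q) (h : IsQHatIsoclinism α β) :
    M0hat G q ≤ (extToCurly q hZH α).ker := by
  refine (Subgroup.closure_le _).2 ?_
  rintro _ (⟨a, b, hab, rfl⟩ | ⟨g, hg, rfl⟩)
  · obtain ⟨a', ha⟩ := QuotientGroup.mk_surjective (α a)
    obtain ⟨b', hb⟩ := QuotientGroup.mk_surjective (α b)
    rw [SetLike.mem_coe, MonoidHom.mem_ker, extToCurly_wmk hZH ha.symm hb.symm]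
    exact mk_wmk_eq_one (h.mul_comm ha.symm hb.symm hab)
  · obtain ⟨g', hg'⟩ := QuotientGroup.mk_surjective (α g)
    rw [SetLike.mem_coe, MonoidHom.mem_ker, extToCurly_dwmk hZH hg'.symm]
    exact mk_dwmk_eq_one (h.pow_eq_one hg'.symm hg)

noncomputable def curlyMap (hZH : ZH ≤ qCenter H q) (h : IsQHatIsoclinism α β) :
    curlyExtSquare G q →* curlyExtSquare H q :=
  QuotientGroup.lift _ (extToCurly q hZH α) (M0hat_le_ker_extToCurly hZH h)

theorem curlyMap_mk (hZH : ZH ≤ qCenter H q) (h : IsQHatIsoclinism α β) (u : extSquare G q) :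
    curlyMap hZH h u = extToCurly q hZH α u :=
  rfl

theorem curlyMap_symm_comp (hZG : ZG ≤ qCenter G q) (hZH : ZH ≤ qCenter H q)
    (h : IsQHatIsoclinism α β) :
    (curlyMap hZG h.symm).comp (curlyMap hZH h) = MonoidHom.id _ := by
  refine QuotientGroup.monoidHom_ext _ (extSquare.hom_ext (fun a b => ?_) (fun a => ?_))
  · obtain ⟨a', ha⟩ := QuotientGroup.mk_surjective (α a)
    obtain ⟨b', hb⟩ := QuotientGroup.mk_surjective (α b)
    simp only [MonoidHom.comp_apply, QuotientGroup.mk'_apply, MonoidHom.id_apply, curlyMap_mk]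
    rw [extToCurly_wmk hZH ha.symm hb.symm, curlyMap_mk,
      extToCurly_wmk hZG (α.symm_apply_eq.2 ha) (α.symm_apply_eq.2 hb)]
  · obtain ⟨a', ha⟩ := QuotientGroup.mk_surjective (α a)
    simp only [MonoidHom.comp_apply, QuotientGroup.mk'_apply, MonoidHom.id_apply, curlyMap_mk]
    rw [extToCurly_dwmk hZH ha.symm, curlyMap_mk, extToCurly_dwmk hZG (α.symm_apply_eq.2 ha)]

noncomputable def curlyEquiv (hZG : ZG ≤ qCenter G q) (hZH : ZH ≤ qCenter H q)
    (h : IsQHatIsoclinism α β) : curlyExtSquare G q ≃* curlyExtSquare H q :=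
  (curlyMap hZH h).toMulEquiv (curlyMap hZG h.symm) (curlyMap_symm_comp hZG hZH h)
    (curlyMap_symm_comp hZH hZG h.symm)

end CurlyEquiv

section CommutatorMap

variable {G H : Type} [Group G] [Group H] {q : ℕ}

theorem M0hat_le_ker {η : extSquare G q →* G}
    (hη₁ : ∀ g h : G, η (wmk G q g h) = g * h * g⁻¹ * h⁻¹) (hη₂ : ∀ g : G, η (dwmk G q g) = g ^ q) :
    M0hat G q ≤ η.ker := by
  refine (Subgroup.closure_le _).2 ?_
  rintro _ (⟨a, b, hab, rfl⟩ | ⟨g, hg, rfl⟩)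
  · rw [SetLike.mem_coe, MonoidHom.mem_ker, hη₁, hab, mul_inv_cancel_right, mul_inv_cancel]
  · rwa [SetLike.mem_coe, MonoidHom.mem_ker, hη₂]

theorem mem_qPowComm {η : extSquare G q →* G}
    (hη₁ : ∀ g h : G, η (wmk G q g h) = g * h * g⁻¹ * h⁻¹) (hη₂ : ∀ g : G, η (dwmk G q g) = g ^ q)
    (u : extSquare G q) : η u ∈ qPowComm G q := by
  have : (qPowComm G q).comap η = ⊤ := extSquare.eq_top_of_generators_mem
    (fun a b => by rw [Subgroup.mem_comap, hη₁]; exact commutator_mem_qPowComm G q a b)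
    (fun a => by rw [Subgroup.mem_comap, hη₂]; exact pow_mem_qPowComm G q a)
  exact (Subgroup.eq_top_iff' _).1 this u

variable {ZG : Subgroup G} [ZG.Normal] {ZH : Subgroup H} [ZH.Normal]
  {α : G ⧸ ZG ≃* H ⧸ ZH} {β : qPowComm G q ≃* qPowComm H q}
  {ηG : extSquare G q →* G} (hηG₁ : ∀ g h : G, ηG (wmk G q g h) = g * h * g⁻¹ * h⁻¹)
  (hηG₂ : ∀ g : G, ηG (dwmk G q g) = g ^ q)
  {ηH : extSquare H q →* H} (hηH₁ : ∀ g h : H, ηH (wmk H q g h) = g * h * g⁻¹ * h⁻¹)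
  (hηH₂ : ∀ g : H, ηH (dwmk H q g) = g ^ q)

theorem lift_curlyMap_mk (hZH : ZH ≤ qCenter H q) (h : IsQHatIsoclinism α β)
    (u : extSquare G q) :
    QuotientGroup.lift _ ηH (M0hat_le_ker hηH₁ hηH₂) (curlyMap hZH h u)
      = β ⟨ηG u, mem_qPowComm hηG₁ hηG₂ u⟩ := by
  have : (QuotientGroup.lift _ ηH (M0hat_le_ker hηH₁ hηH₂)).comp (extToCurly q hZH α)
      = (qPowComm H q).subtype.comp
        (β.toMonoidHom.comp (ηG.codRestrict _ (mem_qPowComm hηG₁ hηG₂))) := by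
    refine extSquare.hom_ext (fun a b => ?_) (fun a => ?_)
    · obtain ⟨a', ha⟩ := QuotientGroup.mk_surjective (α a)
      obtain ⟨b', hb⟩ := QuotientGroup.mk_surjective (α b)
      have hu : ηG.codRestrict _ (mem_qPowComm hηG₁ hηG₂) (wmk G q a b)
          = ⟨_, commutator_mem_qPowComm G q a b⟩ := Subtype.ext (hηG₁ a b)
      simp only [MonoidHom.comp_apply, extToCurly_wmk hZH ha.symm hb.symm, hu]
      rw [QuotientGroup.lift_mk, hηH₁]
      exact ((h a b a' b' ha.symm hb.symm).1).symm
    · obtain ⟨a', ha⟩ := QuotientGroup.mk_surjective (α a)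
      have hu : ηG.codRestrict _ (mem_qPowComm hηG₁ hηG₂) (dwmk G q a)
          = ⟨_, pow_mem_qPowComm G q a⟩ := Subtype.ext (hηG₂ a)
      simp only [MonoidHom.comp_apply, extToCurly_dwmk hZH ha.symm, hu]
      rw [QuotientGroup.lift_mk, hηH₂]
      exact ((h a a a' a' ha.symm ha.symm).2).symm
  exact DFunLike.congr_fun this u

theorem lift_curlyMap_eq_one_iff (hZH : ZH ≤ qCenter H q) (h : IsQHatIsoclinism α β)
    (x : curlyExtSquare G q) :
    QuotientGroup.lift _ ηH (M0hat_le_ker hηH₁ hηH₂) (curlyMap hZH h x) = 1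
      ↔ QuotientGroup.lift _ ηG (M0hat_le_ker hηG₁ hηG₂) x = 1 := by
  obtain ⟨u, rfl⟩ := QuotientGroup.mk_surjective x
  rw [lift_curlyMap_mk hηG₁ hηG₂ hηH₁ hηH₂ hZH h, QuotientGroup.lift_mk, OneMemClass.coe_eq_one,
    map_eq_one_iff β β.injective, Subgroup.mk_eq_one]

end CommutatorMap

end QTensor

open QTensor in
/-- Invariance of the `q̂`-Bogomolov multiplier `B̂₀^q = M^q/M̂₀^q` under
`q̂`-isoclinism.  Here `M^q(G) = ker ηG`, `M̂₀^q(G)` is generated by the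
`x ∧ y` with `[x,y] = 1` together with the `{(g,g)}` with `g^q = 1`, and
`Ẑ_q(G) = {g ∈ Z(G) : g^q = 1}`. -/
theorem qhatBogomolov_iso_of_qhatIsoclinic (q : ℕ) (G H : Type) [Group G] [Group H]
    (ηG : extSquare G q →* G)
    (hηG1 : ∀ g h : G, ηG (wmk G q g h) = g * h * g⁻¹ * h⁻¹)
    (hηG2 : ∀ g : G, ηG (dwmk G q g) = g ^ q)
    (ηH : extSquare H q →* H)
    (hηH1 : ∀ g h : H, ηH (wmk H q g h) = g * h * g⁻¹ * h⁻¹)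
    (hηH2 : ∀ g : H, ηH (dwmk H q g) = g ^ q)
    [((M0hat G q).subgroupOf ηG.ker).Normal] [((M0hat H q).subgroupOf ηH.ker).Normal]
    -- the subgroups `Ẑ_q`:
    (ZqG : Subgroup G) [ZqG.Normal]
    (hZqG : (ZqG : Set G) = {g | g ∈ Subgroup.center G ∧ g ^ q = 1})
    (ZqH : Subgroup H) [ZqH.Normal]
    (hZqH : (ZqH : Set H) = {g | g ∈ Subgroup.center H ∧ g ^ q = 1})
    -- q̂-isoclinism data:
    (α : (G ⧸ ZqG) ≃* (H ⧸ ZqH)) (β : qPowComm G q ≃* qPowComm H q)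
    (hαβ : ∀ (a₁ b₁ : G) (a₂ b₂ : H),
      α (QuotientGroup.mk a₁) = QuotientGroup.mk a₂ →
      α (QuotientGroup.mk b₁) = QuotientGroup.mk b₂ →
      ((β ⟨a₁ * b₁ * a₁⁻¹ * b₁⁻¹, commutator_mem_qPowComm G q a₁ b₁⟩ : qPowComm H q) : H)
          = a₂ * b₂ * a₂⁻¹ * b₂⁻¹ ∧
      ((β ⟨a₁ ^ q, pow_mem_qPowComm G q a₁⟩ : qPowComm H q) : H) = a₂ ^ q) :
    Nonempty ((ηG.ker ⧸ (M0hat G q).subgroupOf ηG.ker) ≃*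
              (ηH.ker ⧸ (M0hat H q).subgroupOf ηH.ker)) := by
  have hZG : ZqG ≤ qCenter G q := (SetLike.coe_injective (hZqG : _ = (qCenter G q : Set G))).le
  have hZH : ZqH ≤ qCenter H q := (SetLike.coe_injective (hZqH : _ = (qCenter H q : Set H))).le
  let e := curlyEquiv hZG hZH hαβ
  have hker := Subgroup.map_ker_eq_ker_of_iff e
    (lift_curlyMap_eq_one_iff hηG1 hηG2 hηH1 hηH2 hZH hαβ)
  exact ⟨(QuotientGroup.subgroupOfKerEquivKerLift ηG _ (M0hat_le_ker hηG1 hηG2)).trans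
    ((e.subgroupMap _).trans ((MulEquiv.subgroupCongr hker).trans
      (QuotientGroup.subgroupOfKerEquivKerLift ηH _ (M0hat_le_ker hηH1 hηH2)).symm))⟩
end

section
/- Let q ≥ 0 be an integer. If A is an abelian group, then A⊗^q A is abelian. -/
/-!
For abelian `A`, relations (1) and (2) make `⊗` bilinear, and expanding `(g g₁) ⊗ (h h₁)`
first on the left and then on the right, or the other way round, shows that any two
`g ⊗ h` commute. Relation (3) makes each `{(g,g)}` commute with the `g ⊗ h`. Relation (6)
with `[g,h] = 1` gives `(g ⊗ h)^q = {(1,1)} = (1 ⊗ 1)^q = 1`, hence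
`g^q ⊗ g₁^q = (g ⊗ g₁^q)^q = 1`, and by relation (5) the `{(g,g)}` commute with each other.
Since the generators pairwise commute, so does the whole group.
-/

theorem PresentedGroup.commute_of_commute_of {α : Type*} {rels : Set (FreeGroup α)}
    (h : ∀ a b : α, Commute (PresentedGroup.of a : PresentedGroup rels) (PresentedGroup.of b))
    (x y : PresentedGroup rels) : Commute x y := by
  have hle := Subgroup.closure_le_centralizer_centralizer
    (Set.range (PresentedGroup.of : α → PresentedGroup rels))
  rw [PresentedGroup.closure_range_of] at hle
  refine Set.centralizer_centralizer_comm_of_comm ?_ x (hle trivial) y (hle trivial)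
  rintro _ ⟨a, rfl⟩ _ ⟨b, rfl⟩
  exact h a b

namespace QTensor

open scoped commutatorElement

section Relations

variable {G : Type} [Group G] {q : ℕ}

theorem tmk_mul_left (g g₁ h : G) :
    tmk G q (g * g₁) h = tmk G q (g * g₁ * g⁻¹) (g * h * g⁻¹) * tmk G q g h :=
  PresentedGroup.mk_eq_mk_of_mul_inv_mem
    (Or.inl <| Or.inl <| Or.inl <| Or.inl <| Or.inl <| Or.inl ⟨g, g₁, h, rfl⟩)

theorem tmk_mul_right (g h h₁ : G) :
    tmk G q g (h * h₁) = tmk G q g h * tmk G q (h * g * h⁻¹) (h * h₁ * h⁻¹) :=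
  PresentedGroup.mk_eq_mk_of_mul_inv_mem
    (Or.inl <| Or.inl <| Or.inl <| Or.inl <| Or.inl <| Or.inr ⟨g, h, h₁, rfl⟩)

theorem dmk_mul_tmk_mul_inv (g g₁ h₁ : G) :
    dmk G q g * tmk G q g₁ h₁ * (dmk G q g)⁻¹ =
      tmk G q (g ^ q * g₁ * (g ^ q)⁻¹) (g ^ q * h₁ * (g ^ q)⁻¹) :=
  PresentedGroup.mk_eq_mk_of_mul_inv_mem
    (Or.inl <| Or.inl <| Or.inl <| Or.inl <| Or.inr ⟨g, g₁, h₁, rfl⟩)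

theorem commutatorElement_dmk_dmk (g g₁ : G) :
    ⁅dmk G q g, dmk G q g₁⁆ = tmk G q (g ^ q) (g₁ ^ q) :=
  PresentedGroup.mk_eq_mk_of_mul_inv_mem (Or.inl <| Or.inl <| Or.inr ⟨g, g₁, rfl⟩)

theorem dmk_commutatorElement (g h : G) : dmk G q ⁅g, h⁆ = tmk G q g h ^ q :=
  PresentedGroup.mk_eq_mk_of_mul_inv_mem (Or.inl <| Or.inr ⟨g, h, rfl⟩)

theorem tmk_one_left (h : G) : tmk G q 1 h = 1 := by
  have h₁ := tmk_mul_left (q := q) 1 1 h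
  simp only [mul_one, one_mul, inv_one] at h₁
  exact left_eq_mul.mp h₁

theorem dmk_one : dmk G q 1 = 1 := by
  simpa [tmk_one_left] using dmk_commutatorElement (q := q) (1 : G) 1

theorem tmk_mul_left_of_commute {g g₁ h : G} (hg₁ : Commute g g₁) (hh : Commute g h) :
    tmk G q (g * g₁) h = tmk G q g₁ h * tmk G q g h := by
  rw [tmk_mul_left, hg₁.mul_inv_cancel, hh.mul_inv_cancel]

theorem tmk_mul_right_of_commute {g h h₁ : G} (hg : Commute h g) (hh₁ : Commute h h₁) :
    tmk G q g (h * h₁) = tmk G q g h * tmk G q g h₁ := by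
  rw [tmk_mul_right, hg.mul_inv_cancel, hh₁.mul_inv_cancel]

theorem tmk_pow_left_of_commute {g h : G} (hgh : Commute g h) (n : ℕ) :
    tmk G q (g ^ n) h = tmk G q g h ^ n := by
  induction n with
  | zero => rw [pow_zero, pow_zero, tmk_one_left]
  | succ n ih =>
    rw [pow_succ, tmk_mul_left_of_commute ((Commute.refl g).pow_left n) (hgh.pow_left n), ih,
      pow_succ']

theorem tmk_pow_eq_one_of_commute {g h : G} (hgh : Commute g h) : tmk G q g h ^ q = 1 := by
  rw [← dmk_commutatorElement, commutatorElement_eq_one_iff_commute.mpr hgh, dmk_one]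

end Relations

section CommGroup

variable {A : Type} [CommGroup A] {q : ℕ}

theorem commute_tmk_tmk (g h g₁ h₁ : A) : Commute (tmk A q g h) (tmk A q g₁ h₁) := by
  have hlr : tmk A q (g * g₁) (h * h₁) =
      tmk A q g₁ h * (tmk A q g₁ h₁ * tmk A q g h) * tmk A q g h₁ := by
    rw [tmk_mul_left_of_commute (.all g g₁) (.all g _), tmk_mul_right_of_commute (.all h g₁)
      (.all h h₁), tmk_mul_right_of_commute (.all h g) (.all h h₁)]
    simp only [mul_assoc]
  have hrl : tmk A q (g * g₁) (h * h₁) =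
      tmk A q g₁ h * (tmk A q g h * tmk A q g₁ h₁) * tmk A q g h₁ := by
    rw [tmk_mul_right_of_commute (.all h _) (.all h h₁), tmk_mul_left_of_commute (.all g g₁)
      (.all g h), tmk_mul_left_of_commute (.all g g₁) (.all g h₁)]
    simp only [mul_assoc]
  exact (mul_left_cancel (mul_right_cancel (hlr.symm.trans hrl))).symm

theorem commute_dmk_tmk (g g₁ h₁ : A) : Commute (dmk A q g) (tmk A q g₁ h₁) := by
  have h := dmk_mul_tmk_mul_inv (q := q) g g₁ h₁
  rwa [mul_inv_cancel_comm, mul_inv_cancel_comm, mul_inv_eq_iff_eq_mul] at h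

theorem commute_dmk_dmk (g g₁ : A) : Commute (dmk A q g) (dmk A q g₁) := by
  rw [← commutatorElement_eq_one_iff_commute, commutatorElement_dmk_dmk,
    tmk_pow_left_of_commute (.all g _), tmk_pow_eq_one_of_commute (.all g _)]

theorem commute_of_of (j k : Gen A) :
    Commute (PresentedGroup.of j : tensorSquare A q) (PresentedGroup.of k) := by
  cases j with
  | t g h =>
    cases k with
    | t g₁ h₁ => exact commute_tmk_tmk g h g₁ h₁
    | d g₁ => exact (commute_dmk_tmk g₁ g h).symm
  | d g =>
    cases k with
    | t g₁ h₁ => exact commute_dmk_tmk g g₁ h₁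
    | d g₁ => exact commute_dmk_dmk g g₁

end CommGroup

end QTensor

open QTensor in
/-- If `A` is abelian, then `A ⊗^q A` is abelian. -/
theorem tensorSquare_comm_of_comm (q : ℕ) (A : Type) [CommGroup A] :
    ∀ x y : tensorSquare A q, x * y = y * x :=
  PresentedGroup.commute_of_commute_of commute_of_of
end

section
/- Let q ≥ 0 be an integer and G a group. For all g, h, g₁, h₁ ∈ G, the following identity holds in G⊗^q G: [g⊗h, g₁⊗h₁] = [g,h]⊗[g₁,h₁], where the left-hand bracket is the commutator in G⊗^q G and [g,h] = ghg⁻¹h⁻¹ in G. -/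
/-!
Only relations (1) and (2) are needed: they say that `(g, h) ↦ g ⊗ h` is a crossed pairing.
For any crossed pairing `f`, expanding `f (g a) (h b)` first in the left and then in the right
argument, and the other way round, shows that conjugation by `f g h` acts on values of `f` as
conjugation by `[g, h]` on both arguments. Expanding `f (c a) b` in two ways and using this
for `[a, b]` gives `f (^c a) (^c b) = f c [a, b] · f a b`. With `c = [g, h]` these combine to
`[f g h, f g₁ h₁] = f (^c g₁) (^c h₁) · (f g₁ h₁)⁻¹ = f [g, h] [g₁, h₁]`.
-/

structure IsCrossedPairing {G H : Type*} [Group G] [Group H] (f : G → G → H) : Prop where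
  mul_left : ∀ g g₁ h, f (g * g₁) h = f (g * g₁ * g⁻¹) (g * h * g⁻¹) * f g h
  mul_right : ∀ g h h₁, f g (h * h₁) = f g h * f (h * g * h⁻¹) (h * h₁ * h⁻¹)

namespace IsCrossedPairing

open scoped commutatorElement

variable {G H : Type*} [Group G] [Group H] {f : G → G → H} (hf : IsCrossedPairing f)
include hf

theorem apply_conj_mul_swap (g h a b : G) :
    f (g * h * a * (g * h)⁻¹) (g * h * b * (g * h)⁻¹) * f g h =
      f g h * f (h * g * a * (h * g)⁻¹) (h * g * b * (h * g)⁻¹) := by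
  have left_first : f (g * a) (h * b) = f (g * a * g⁻¹) (g * h * g⁻¹) *
      (f (g * h * a * (g * h)⁻¹) (g * h * b * (g * h)⁻¹) * f g h) *
        f (h * g * h⁻¹) (h * b * h⁻¹) := by
    rw [hf.mul_left g a, hf.mul_right g h b,
      show g * (h * b) * g⁻¹ = g * h * g⁻¹ * (g * b * g⁻¹) by group,
      hf.mul_right (g * a * g⁻¹) (g * h * g⁻¹)]
    group
  have right_first : f (g * a) (h * b) = f (g * a * g⁻¹) (g * h * g⁻¹) *
      (f g h * f (h * g * a * (h * g)⁻¹) (h * g * b * (h * g)⁻¹)) *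
        f (h * g * h⁻¹) (h * b * h⁻¹) := by
    rw [hf.mul_right (g * a) h b, hf.mul_left g a h,
      show h * (g * a) * h⁻¹ = h * g * h⁻¹ * (h * a * h⁻¹) by group,
      hf.mul_left (h * g * h⁻¹) (h * a * h⁻¹)]
    group
  exact mul_left_cancel (mul_right_cancel (left_first.symm.trans right_first))

theorem apply_mul_apply_mul_inv (g h a b : G) :
    f g h * f a b * (f g h)⁻¹ = f (⁅g, h⁆ * a * ⁅g, h⁆⁻¹) (⁅g, h⁆ * b * ⁅g, h⁆⁻¹) := by
  have swap := hf.apply_conj_mul_swap g h ((h * g)⁻¹ * a * (h * g)) ((h * g)⁻¹ * b * (h * g))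
  rw [commutatorElement_def, mul_inv_eq_iff_eq_mul]
  convert swap.symm using 3 <;> group

theorem apply_conj (c a b : G) : f (c * a * c⁻¹) (c * b * c⁻¹) = f c ⁅a, b⁆ * f a b := by
  have expand_via_a : f (c * a) b = f c (a * b * a⁻¹) * f a b := by
    simpa [mul_assoc] using hf.mul_left a (a⁻¹ * c * a) b
  have split_commutator : f c (a * b * a⁻¹) =
      f c ⁅a, b⁆ * f (⁅a, b⁆ * c * ⁅a, b⁆⁻¹) (⁅a, b⁆ * b * ⁅a, b⁆⁻¹) := by
    rw [← hf.mul_right, commutatorElement_def]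
    group
  apply mul_right_cancel (b := f c b)
  rw [← hf.mul_left, expand_via_a, split_commutator, ← hf.apply_mul_apply_mul_inv]
  group

theorem commutator_apply (g h g₁ h₁ : G) : ⁅f g h, f g₁ h₁⁆ = f ⁅g, h⁆ ⁅g₁, h₁⁆ := by
  rw [commutatorElement_def (f g h), hf.apply_mul_apply_mul_inv, hf.apply_conj,
    mul_inv_cancel_right]

end IsCrossedPairing

theorem QTensor.isCrossedPairing_tmk (q : ℕ) (G : Type) [Group G] :
    IsCrossedPairing (QTensor.tmk G q) where
  mul_left g g₁ h :=
    PresentedGroup.mk_eq_mk_of_mul_inv_mem (Or.inl <| Or.inl <| Or.inl <| Or.inl <| Or.inl <|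
      Or.inl ⟨g, g₁, h, rfl⟩)
  mul_right g h h₁ :=
    PresentedGroup.mk_eq_mk_of_mul_inv_mem (Or.inl <| Or.inl <| Or.inl <| Or.inl <| Or.inl <|
      Or.inr ⟨g, h, h₁, rfl⟩)

open QTensor commutatorElement in
/-- In `G ⊗^q G` one has `[g ⊗ h, g₁ ⊗ h₁] = [g,h] ⊗ [g₁,h₁]`. -/
theorem commutator_tmk (q : ℕ) (G : Type) [Group G] (g h g₁ h₁ : G) :
    ⁅tmk G q g h, tmk G q g₁ h₁⁆ =
      tmk G q (g * h * g⁻¹ * h⁻¹) (g₁ * h₁ * g₁⁻¹ * h₁⁻¹) :=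
  (isCrossedPairing_tmk q G).commutator_apply g h g₁ h₁
end
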